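/- (Proposition 3: FIM of the pilot-based PPM ISAC system.) The matrix product J_{ppm,p}ᵀ · I_η · J_{ppm,p} equals the 4×4 block matrix, with rows and columns each indexed by (Fin L) ⊕ (Fin 1) ⊕ (Fin L) ⊕ (Fin L), whose blocks are: (1,1) = Hᵀ·(Λ^Pττ + Λ^Dττ)·H, (1,2) = Hᵀ·Λ^Dττ·E, (1,3) = 0, (1,4) = Hᵀ·(Λ^Pτα + Λ^Dτα); (2,1) = Eᵀ·Λ^Dττ·H, (2,2) = Eᵀ·Λ^Dττ·E, (2,3) = 0, (2,4) = Eᵀ·Λ^Dτα; (3,1) = 0, (3,2) = 0, (3,3) = 𝔟^{PD}·Hᵀ·Λφφ·H where 𝔟^{PD} = 2π²·T_f²·(P+D)·(P+D−1)·(2(P+D)−1)/3, (3,4) = 0; (4,1) = (Λ^Pατ + Λ^Dατ)·H, (4,2) = Λ^Dατ·E, (4,3) = 0, (4,4) = Λ^Pαα + Λ^Dαα. -/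
import Mathlib


open Matrix

noncomputable section

/-- The matrix `H`: first column all ones, agreeing with the identity elsewhere. -/
def Hmat (L : ℕ) : Matrix (Fin L) (Fin L) ℂ :=
  Matrix.of fun i j => if j.val = 0 ∨ i = j then 1 else 0

/-- The all-ones column vector `E` of length `L`. -/
def Emat (L : ℕ) : Matrix (Fin L) (Fin 1) ℂ :=
  Matrix.of fun _ _ => 1

/-- Index of the observation vector in the pilot-based systems:
pilot delays, data delays, phases, pilot amplitudes, data amplitudes. -/
abbrev PIdx (L P D : ℕ) :=
  Fin L ⊕ Fin L ⊕ (Fin (P + D) × Fin L) ⊕ Fin L ⊕ Fin L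

/-- The FIM of the observation vector in the pilot-based case. -/
def IetaP (L P D : ℕ)
    (ΛPττ ΛDττ ΛPτα ΛDτα ΛPατ ΛDατ ΛPαα ΛDαα Λφφ : Matrix (Fin L) (Fin L) ℂ) :
    Matrix (PIdx L P D) (PIdx L P D) ℂ :=
  Matrix.of fun i j =>
    match i, j with
    | Sum.inl a, Sum.inl b => ΛPττ a b
    | Sum.inr (Sum.inl a), Sum.inr (Sum.inl b) => ΛDττ a b
    | Sum.inl a, Sum.inr (Sum.inr (Sum.inr (Sum.inl b))) => ΛPτα a b
    | Sum.inr (Sum.inl a), Sum.inr (Sum.inr (Sum.inr (Sum.inr b))) => ΛDτα a b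
    | Sum.inr (Sum.inr (Sum.inr (Sum.inl a))), Sum.inl b => ΛPατ a b
    | Sum.inr (Sum.inr (Sum.inr (Sum.inr a))), Sum.inr (Sum.inl b) => ΛDατ a b
    | Sum.inr (Sum.inr (Sum.inr (Sum.inl a))), Sum.inr (Sum.inr (Sum.inr (Sum.inl b))) => ΛPαα a b
    | Sum.inr (Sum.inr (Sum.inr (Sum.inr a))), Sum.inr (Sum.inr (Sum.inr (Sum.inr b))) => ΛDαα a b
    | Sum.inr (Sum.inr (Sum.inl (κ, a))), Sum.inr (Sum.inr (Sum.inl (κ', b))) =>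
        if κ = κ' then Λφφ a b else 0
    | _, _ => 0

/-- The Jacobian matrix of the pilot-based PPM ISAC case: row blocks `[H, 0, 0, 0]` for the
pilot delays, `[H, E, 0, 0]` for the data delays, `[0, 0, (2πκT_f)·H, 0]` for the phases,
`[0, 0, 0, I_L]` for the pilot and data amplitudes. -/
def JppmP (L P D : ℕ) (Tf : ℝ) :
    Matrix (PIdx L P D) (Fin L ⊕ Fin 1 ⊕ Fin L ⊕ Fin L) ℂ :=
  Matrix.of fun i j =>
    match i, j with
    | Sum.inl a, Sum.inl b => Hmat L a b
    | Sum.inr (Sum.inl a), Sum.inl b => Hmat L a b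
    | Sum.inr (Sum.inl a), Sum.inr (Sum.inl b) => Emat L a b
    | Sum.inr (Sum.inr (Sum.inl (κ, a))), Sum.inr (Sum.inr (Sum.inl b)) =>
        ((2 * Real.pi * (κ.1 : ℝ) * Tf : ℝ) : ℂ) * Hmat L a b
    | Sum.inr (Sum.inr (Sum.inr (Sum.inl a))), Sum.inr (Sum.inr (Sum.inr b)) =>
        (1 : Matrix (Fin L) (Fin L) ℂ) a b
    | Sum.inr (Sum.inr (Sum.inr (Sum.inr a))), Sum.inr (Sum.inr (Sum.inr b)) =>
        (1 : Matrix (Fin L) (Fin L) ℂ) a b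
    | _, _ => 0

set_option maxHeartbeats 1600000 in
/-- Proposition 3: the FIM of the pilot-based PPM ISAC system. -/
theorem fim_ppm_pilot (L P D : ℕ) (hL : 1 ≤ L) (Tf : ℝ)
    (ΛPττ ΛDττ ΛPτα ΛDτα ΛPατ ΛDατ ΛPαα ΛDαα Λφφ : Matrix (Fin L) (Fin L) ℂ) :
    (JppmP L P D Tf)ᵀ *
        IetaP L P D ΛPττ ΛDττ ΛPτα ΛDτα ΛPατ ΛDατ ΛPαα ΛDαα Λφφ * JppmP L P D Tf =
      Matrix.of (fun (i j : Fin L ⊕ Fin 1 ⊕ Fin L ⊕ Fin L) =>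
        match i, j with
        | Sum.inl a, Sum.inl b => ((Hmat L)ᵀ * (ΛPττ + ΛDττ) * Hmat L) a b
        | Sum.inl a, Sum.inr (Sum.inl b) => ((Hmat L)ᵀ * ΛDττ * Emat L) a b
        | Sum.inl _, Sum.inr (Sum.inr (Sum.inl _)) => 0
        | Sum.inl a, Sum.inr (Sum.inr (Sum.inr b)) => ((Hmat L)ᵀ * (ΛPτα + ΛDτα)) a b
        | Sum.inr (Sum.inl a), Sum.inl b => ((Emat L)ᵀ * ΛDττ * Hmat L) a b
        | Sum.inr (Sum.inl a), Sum.inr (Sum.inl b) => ((Emat L)ᵀ * ΛDττ * Emat L) a b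
        | Sum.inr (Sum.inl _), Sum.inr (Sum.inr (Sum.inl _)) => 0
        | Sum.inr (Sum.inl a), Sum.inr (Sum.inr (Sum.inr b)) => ((Emat L)ᵀ * ΛDτα) a b
        | Sum.inr (Sum.inr (Sum.inl _)), Sum.inl _ => 0
        | Sum.inr (Sum.inr (Sum.inl _)), Sum.inr (Sum.inl _) => 0
        | Sum.inr (Sum.inr (Sum.inl a)), Sum.inr (Sum.inr (Sum.inl b)) =>
            ((2 * Real.pi ^ 2 * Tf ^ 2 * ((P : ℝ) + (D : ℝ)) * ((P : ℝ) + (D : ℝ) - 1) *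
                (2 * ((P : ℝ) + (D : ℝ)) - 1) / 3 : ℝ) : ℂ) *
              ((Hmat L)ᵀ * Λφφ * Hmat L) a b
        | Sum.inr (Sum.inr (Sum.inl _)), Sum.inr (Sum.inr (Sum.inr _)) => 0
        | Sum.inr (Sum.inr (Sum.inr a)), Sum.inl b => ((ΛPατ + ΛDατ) * Hmat L) a b
        | Sum.inr (Sum.inr (Sum.inr a)), Sum.inr (Sum.inl b) => (ΛDατ * Emat L) a b
        | Sum.inr (Sum.inr (Sum.inr _)), Sum.inr (Sum.inr (Sum.inl _)) => 0
        | Sum.inr (Sum.inr (Sum.inr a)), Sum.inr (Sum.inr (Sum.inr b)) => (ΛPαα + ΛDαα) a b) := by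
  ext i j
  rcases i with a | a | a | a <;> rcases j with b | b | b | b
  · simp [Matrix.mul_apply, Fintype.sum_sum_type, Fintype.sum_prod_type, IetaP, JppmP,
      Matrix.one_apply, add_mul, mul_add, Finset.sum_add_distrib, mul_ite, ite_mul,
      Finset.sum_ite_eq, Finset.sum_ite_eq']
  · simp [Matrix.mul_apply, Fintype.sum_sum_type, Fintype.sum_prod_type, IetaP, JppmP,
      Matrix.one_apply, add_mul, mul_add, Finset.sum_add_distrib, mul_ite, ite_mul,
      Finset.sum_ite_eq, Finset.sum_ite_eq']
  · simp [Matrix.mul_apply, Fintype.sum_sum_type, Fintype.sum_prod_type, IetaP, JppmP,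
      Matrix.one_apply, add_mul, mul_add, Finset.sum_add_distrib, mul_ite, ite_mul,
      Finset.sum_ite_eq, Finset.sum_ite_eq']
  · simp [Matrix.mul_apply, Fintype.sum_sum_type, Fintype.sum_prod_type, IetaP, JppmP,
      Matrix.one_apply, add_mul, mul_add, Finset.sum_add_distrib, mul_ite, ite_mul,
      Finset.sum_ite_eq, Finset.sum_ite_eq']
  · simp [Matrix.mul_apply, Fintype.sum_sum_type, Fintype.sum_prod_type, IetaP, JppmP,
      Matrix.one_apply, add_mul, mul_add, Finset.sum_add_distrib, mul_ite, ite_mul,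
      Finset.sum_ite_eq, Finset.sum_ite_eq']
  · simp [Matrix.mul_apply, Fintype.sum_sum_type, Fintype.sum_prod_type, IetaP, JppmP,
      Matrix.one_apply, add_mul, mul_add, Finset.sum_add_distrib, mul_ite, ite_mul,
      Finset.sum_ite_eq, Finset.sum_ite_eq']
  · simp [Matrix.mul_apply, Fintype.sum_sum_type, Fintype.sum_prod_type, IetaP, JppmP,
      Matrix.one_apply, add_mul, mul_add, Finset.sum_add_distrib, mul_ite, ite_mul,
      Finset.sum_ite_eq, Finset.sum_ite_eq']
  · simp [Matrix.mul_apply, Fintype.sum_sum_type, Fintype.sum_prod_type, IetaP, JppmP,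
      Matrix.one_apply, add_mul, mul_add, Finset.sum_add_distrib, mul_ite, ite_mul,
      Finset.sum_ite_eq, Finset.sum_ite_eq']
  · simp [Matrix.mul_apply, Fintype.sum_sum_type, Fintype.sum_prod_type, IetaP, JppmP,
      Matrix.one_apply, add_mul, mul_add, Finset.sum_add_distrib, mul_ite, ite_mul,
      Finset.sum_ite_eq, Finset.sum_ite_eq']
  · simp [Matrix.mul_apply, Fintype.sum_sum_type, Fintype.sum_prod_type, IetaP, JppmP,
      Matrix.one_apply, add_mul, mul_add, Finset.sum_add_distrib, mul_ite, ite_mul,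
      Finset.sum_ite_eq, Finset.sum_ite_eq']
  · simp only [Matrix.mul_apply, Matrix.transpose_apply, Fintype.sum_sum_type,
      Fintype.sum_prod_type, IetaP, JppmP, Matrix.of_apply, mul_ite, ite_mul, zero_mul,
      mul_zero, Finset.sum_ite_eq, Finset.sum_ite_eq', Finset.mem_univ, if_true,
      Finset.sum_const_zero, zero_add, add_zero, Finset.sum_ite_irrel]
    have key : ∀ κ : Fin (P+D),
        (∑ x1 : Fin L, (∑ x3 : Fin L, ((2 * Real.pi * (κ:ℕ) * Tf : ℝ):ℂ) * Hmat L x3 a * Λφφ x3 x1) *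
          (((2 * Real.pi * (κ:ℕ) * Tf : ℝ):ℂ) * Hmat L x1 b))
        = ((2 * Real.pi * (κ:ℕ) * Tf : ℝ):ℂ)^2 *
          ∑ x : Fin L, (∑ x1 : Fin L, Hmat L x1 a * Λφφ x1 x) * Hmat L x b := by
      intro κ
      rw [Finset.mul_sum]
      refine Finset.sum_congr rfl fun x _ => ?_
      rw [Finset.sum_mul, Finset.sum_mul, Finset.mul_sum]
      refine Finset.sum_congr rfl fun y _ => ?_
      ring
    rw [Finset.sum_congr rfl fun κ _ => key κ, ← Finset.sum_mul]
    congr 1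
    have sq : ∀ n : ℕ, ∑ κ : Fin n, ((κ:ℕ):ℝ)^2 = n*(n-1)*(2*n-1)/6 := by
      intro n
      induction n with
      | zero => simp
      | succ n ih => rw [Fin.sum_univ_castSucc]; simp [ih]; ring
    calc ∑ κ : Fin (P+D), ((2 * Real.pi * (κ:ℕ) * Tf : ℝ):ℂ)^2
        = ((∑ κ : Fin (P+D), (2 * Real.pi * (κ:ℕ) * Tf)^2 : ℝ) : ℂ) := by
          push_cast
          exact Finset.sum_congr rfl fun κ _ => by ring
      _ = _ := by
          rw [show ∑ κ : Fin (P+D), (2 * Real.pi * ((κ:ℕ):ℝ) * Tf)^2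
              = (2*Real.pi*Tf)^2 * ∑ κ : Fin (P+D), ((κ:ℕ):ℝ)^2 by
            rw [Finset.mul_sum]; exact Finset.sum_congr rfl fun κ _ => by ring]
          rw [sq]
          push_cast
          ring_nf
  · simp [Matrix.mul_apply, Fintype.sum_sum_type, Fintype.sum_prod_type, IetaP, JppmP,
      Matrix.one_apply, add_mul, mul_add, Finset.sum_add_distrib, mul_ite, ite_mul,
      Finset.sum_ite_eq, Finset.sum_ite_eq']
  · simp [Matrix.mul_apply, Fintype.sum_sum_type, Fintype.sum_prod_type, IetaP, JppmP,
      Matrix.one_apply, add_mul, mul_add, Finset.sum_add_distrib, mul_ite, ite_mul,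
      Finset.sum_ite_eq, Finset.sum_ite_eq']
  · simp [Matrix.mul_apply, Fintype.sum_sum_type, Fintype.sum_prod_type, IetaP, JppmP,
      Matrix.one_apply, add_mul, mul_add, Finset.sum_add_distrib, mul_ite, ite_mul,
      Finset.sum_ite_eq, Finset.sum_ite_eq']
  · simp [Matrix.mul_apply, Fintype.sum_sum_type, Fintype.sum_prod_type, IetaP, JppmP,
      Matrix.one_apply, add_mul, mul_add, Finset.sum_add_distrib, mul_ite, ite_mul,
      Finset.sum_ite_eq, Finset.sum_ite_eq']
  · simp [Matrix.mul_apply, Fintype.sum_sum_type, Fintype.sum_prod_type, IetaP, JppmP,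
      Matrix.one_apply, add_mul, mul_add, Finset.sum_add_distrib, mul_ite, ite_mul,
      Finset.sum_ite_eq, Finset.sum_ite_eq']
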